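/- (Cube Lemma) Let λ be a ternary operation on a set M, written [z x y], satisfying symmetry [z x y] = [y x z] and (weak) flatness: [[w x y] y [y x z]] = [[w x z] z [z x y]] for all x, y, z, w. Then for any points 0, 1, 2, 4 of M, the six expressions [[4·0·1] 1 [1·0·2]], [[4·0·2] 2 [2·0·1]], [[2·0·4] 4 [4·0·1]], [[2·0·1] 1 [1·0·4]], [[1·0·2] 2 [2·0·4]], and [[1·0·4] 4 [4·0·2]] are all equal. -/

import Mathlib

/-! With `o` as origin, `farVertex T o w y z = [[w o y] y [y o z]]` transports `w` along the
edge from `o` to `y` and then along the edge from `y` to `[y o z]`; it is the candidate for the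
vertex of the cube spanned at `o` by `w`, `y`, `z` opposite to `o`. Flatness says that it is
symmetric in `y` and `z`, and symmetry of `λ` that it is symmetric in `w` and
`z`. These two transpositions generate all permutations of `w`, `y`, `z`, so the six
expressions of the lemma coincide. -/

section FarVertex

variable {M : Type*} (T : M → M → M → M)

def farVertex (o w y z : M) : M := T (T w o y) y (T y o z)

variable {T}

theorem farVertex_swap_right
    (hflat : ∀ x y z w : M, T (T w x y) y (T y x z) = T (T w x z) z (T z x y))
    (o w y z : M) : farVertex T o w y z = farVertex T o w z y :=
  hflat o y z w

theorem farVertex_swap_outer (hsymm : ∀ x y z : M, T z x y = T y x z) (o w y z : M) :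
    farVertex T o w y z = farVertex T o z y w := by
  unfold farVertex
  rw [hsymm y (T y o z), hsymm o y z, hsymm o y w]

theorem farVertex_swap_left (hsymm : ∀ x y z : M, T z x y = T y x z)
    (hflat : ∀ x y z w : M, T (T w x y) y (T y x z) = T (T w x z) z (T z x y))
    (o w y z : M) : farVertex T o w y z = farVertex T o y w z := by
  rw [farVertex_swap_outer hsymm, farVertex_swap_right hflat, farVertex_swap_outer hsymm]

end FarVertex

/-- Cube Lemma: for a symmetric, weakly flat ternary operation
`T z x y = [z x y]`, the six expressions around the cube agree. -/
theorem cube_lemma {M : Type*} (T : M → M → M → M)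
    (hsymm : ∀ x y z : M, T z x y = T y x z)
    (hflat : ∀ x y z w : M, T (T w x y) y (T y x z) = T (T w x z) z (T z x y)) :
    ∀ o a b c : M,
      T (T c o a) a (T a o b) = T (T c o b) b (T b o a) ∧
      T (T c o b) b (T b o a) = T (T b o c) c (T c o a) ∧
      T (T b o c) c (T c o a) = T (T b o a) a (T a o c) ∧
      T (T b o a) a (T a o c) = T (T a o b) b (T b o c) ∧
      T (T a o b) b (T b o c) = T (T a o c) c (T c o b) := by
  intro o a b c
  exact ⟨farVertex_swap_right hflat o c a b, farVertex_swap_left hsymm hflat o c b a,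
    farVertex_swap_right hflat o b c a, farVertex_swap_left hsymm hflat o b a c,
    farVertex_swap_right hflat o a b c⟩
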